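/- Rectification is weight-preserving and injective: for a composition α and the composed rectification algorithm R_α, if R_α(D) ≠ 0 then wt(R_α(D)) = wt(D), and if R_α(D) = R_α(D') ≠ 0 then D = D'. -/

import Mathlib

open scoped Classical

/-- A Kohnert move: take the rightmost cell of row `r` and move it down in its
column to the highest open row `r'` below (rows indexed from 1). Cells are `(row, column)`. -/
def KohnertMove (D D' : Finset (ℕ × ℕ)) : Prop :=
  ∃ r c r', (r, c) ∈ D ∧ (∀ c', (r, c') ∈ D → c' ≤ c) ∧
    1 ≤ r' ∧ r' < r ∧ (r', c) ∉ D ∧ (∀ r'', r' < r'' → r'' < r → (r'', c) ∈ D) ∧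
    D' = insert (r', c) (D.erase (r, c))

/-- The largest part of a weak composition. -/
def maxPart (a : List ℕ) : ℕ := a.foldr max 0

/-- Number of cells of a diagram in row `i`. -/
def rowWeight (D : Finset (ℕ × ℕ)) (i : ℕ) : ℕ :=
  (D.filter (fun p => p.1 = i)).card

/-- The weight of a diagram, as a finitely supported function recording the
number of cells in each row. -/
noncomputable def wtF (D : Finset (ℕ × ℕ)) : ℕ →₀ ℕ := ∑ p ∈ D, Finsupp.single p.1 1

/-- The exponent vector `x^a` of a weak composition `a` (1-based variables). -/
noncomputable def compFinsupp (a : List ℕ) : ℕ →₀ ℕ :=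
  ∑ i ∈ Finset.range a.length, Finsupp.single (i + 1) (a.getD i 0)

/-- The boxes matched by a partial matching. -/
def matchedBoxes (M : Finset ((ℕ × ℕ) × (ℕ × ℕ))) : Finset (ℕ × ℕ) :=
  M.image Prod.fst ∪ M.image Prod.snd

/-- Initial vertical `i`-pairing: pair any boxes of rows `i` and `i+1` in the
same column. -/
def vInit (i : ℕ) (D : Finset (ℕ × ℕ)) : Finset ((ℕ × ℕ) × (ℕ × ℕ)) :=
  (D.filter (fun p => p.1 = i + 1 ∧ (i, p.2) ∈ D)).image (fun p => (p, (i, p.2)))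

/-- One step of the iterative vertical `i`-pairing: pair an unpaired box of row
`i+1` with the rightmost unpaired box of row `i` in a column to its left,
provided all boxes of rows `i`, `i+1` in the columns strictly between them are
already paired. -/
def VStep (i : ℕ) (D : Finset (ℕ × ℕ)) (M M' : Finset ((ℕ × ℕ) × (ℕ × ℕ))) : Prop :=
  ∃ cx cy, (i + 1, cx) ∈ D ∧ (i, cy) ∈ D ∧ cy < cx ∧
    (i + 1, cx) ∉ matchedBoxes M ∧ (i, cy) ∉ matchedBoxes M ∧
    (∀ p ∈ D, (p.1 = i ∨ p.1 = i + 1) → cy < p.2 → p.2 < cx → p ∈ matchedBoxes M) ∧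
    M' = insert ((i + 1, cx), (i, cy)) M

/-- The vertical `i`-pairing of `D`: a matching obtained from the same-column
pairing by iterating `VStep` until no further step applies. -/
def VOutcome (i : ℕ) (D : Finset (ℕ × ℕ)) (M : Finset ((ℕ × ℕ) × (ℕ × ℕ))) : Prop :=
  Relation.ReflTransGen (VStep i D) (vInit i D) M ∧ ∀ M', ¬ VStep i D M M'

/-- The raising operator `e_i` as a relation: `RaiseRel i D D'` holds when `D'`
is obtained from `D` by pushing the rightmost vertically unpaired box of row
`i+1` down to row `i` (`e_i(D) = 0` corresponds to no `D'` existing). -/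
def RaiseRel (i : ℕ) (D D' : Finset (ℕ × ℕ)) : Prop :=
  ∃ M c, VOutcome i D M ∧ (i + 1, c) ∈ D ∧ (i + 1, c) ∉ matchedBoxes M ∧
    (∀ c', (i + 1, c') ∈ D → (i + 1, c') ∉ matchedBoxes M → c' ≤ c) ∧
    D' = insert (i, c) (D.erase (i + 1, c))

/-- Initial horizontal `c`-pairing: pair any boxes of columns `c` and `c+1` in
the same row. Cells are `(row, column)`. -/
def hInit (c : ℕ) (D : Finset (ℕ × ℕ)) : Finset ((ℕ × ℕ) × (ℕ × ℕ)) :=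
  (D.filter (fun p => p.2 = c + 1 ∧ (p.1, c) ∈ D)).image (fun p => (p, (p.1, c)))

/-- One step of the iterative horizontal `c`-pairing: pair an unpaired box of
column `c+1` with the lowest unpaired box of column `c` in a row above it,
provided all boxes of columns `c`, `c+1` in the rows strictly between them are
already paired. -/
def HStep (c : ℕ) (D : Finset (ℕ × ℕ)) (M M' : Finset ((ℕ × ℕ) × (ℕ × ℕ))) : Prop :=
  ∃ rx ry, (rx, c + 1) ∈ D ∧ (ry, c) ∈ D ∧ rx < ry ∧
    (rx, c + 1) ∉ matchedBoxes M ∧ (ry, c) ∉ matchedBoxes M ∧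
    (∀ p ∈ D, (p.2 = c ∨ p.2 = c + 1) → rx < p.1 → p.1 < ry → p ∈ matchedBoxes M) ∧
    M' = insert ((rx, c + 1), (ry, c)) M

/-- The horizontal `c`-pairing of `D`. -/
def HOutcome (c : ℕ) (D : Finset (ℕ × ℕ)) (M : Finset ((ℕ × ℕ) × (ℕ × ℕ))) : Prop :=
  Relation.ReflTransGen (HStep c D) (hInit c D) M ∧ ∀ M', ¬ HStep c D M M'

/-- The rectification operator `𝚎̄_c` as a relation: `RectRel c D D'` holds when
`D'` is obtained from `D` by pushing the bottom-most horizontally unpaired box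
of column `c+1` left to column `c` (`𝚎̄_c(D) = 0` corresponds to no `D'`). -/
def RectRel (c : ℕ) (D D' : Finset (ℕ × ℕ)) : Prop :=
  ∃ M r, HOutcome c D M ∧ (r, c + 1) ∈ D ∧ (r, c + 1) ∉ matchedBoxes M ∧
    (∀ r', (r', c + 1) ∈ D → (r', c + 1) ∉ matchedBoxes M → r ≤ r') ∧
    D' = insert (r, c) (D.erase (r, c + 1))

/-- Composing a list of indexed partial operators (given as relations), applying
the head of the list first. -/
def ChainRel (R : ℕ → Finset (ℕ × ℕ) → Finset (ℕ × ℕ) → Prop) :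
    List ℕ → Finset (ℕ × ℕ) → Finset (ℕ × ℕ) → Prop
  | [], D, D' => D' = D
  | c :: cs, D, D' => ∃ E, R c D E ∧ ChainRel R cs E D'

/-- The steps (in order of application) of
`R_{α,i} = (𝚎̄_{α_i}∘⋯∘𝚎̄_{m-1})∘⋯∘(𝚎̄_1∘⋯∘𝚎̄_{m-α_i})`, where `ai = α_i`:
for `k = 1, …, α_i` the block `𝚎̄_{m-α_i+k-1}, …, 𝚎̄_k`. -/
def rectStepsRow (m ai : ℕ) : List ℕ :=
  (List.range ai).foldr (fun k acc => (List.range' (k + 1) (m - ai)).reverse ++ acc) []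

/-- The steps (in order of application) of `R_α = R_{α,ℓ(α)}∘⋯∘R_{α,1}`. -/
def rectSteps (α : List ℕ) : List ℕ :=
  (List.range α.length).foldr (fun j acc => rectStepsRow (maxPart α) (α.getD j 0) ++ acc) []

/-- The Rectification algorithm `R_α` as a relation on diagrams. -/
def RalgRel (α : List ℕ) : Finset (ℕ × ℕ) → Finset (ℕ × ℕ) → Prop :=
  ChainRel RectRel (rectSteps α)


/-!
Reading rows from the top, a box of column `c` opens and a box of column `c + 1` closes a
bracket, and the horizontal `c`-pairing matches brackets. If `𝚎̄_c` moves the box of row `r`,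
then in the image every window of rows `(r, s]` has at least as many boxes in column `c + 1`
as in column `c` (the moved box was unpaired, so every box of column `c` above it is paired
with a box of column `c + 1` between them), while for every `a < r` the window `(a, r]` has
strictly more boxes in column `c` (every lower box of column `c + 1` is paired with a box of
column `c` below row `r`). These two properties determine `r` from the image, so `𝚎̄_c` is
injective; it moves a box within its row, so it preserves the weight.
-/

open Finset

lemma card_le_card_of_partner {α β : Type*} {M : Finset β} {S T : Finset α} (f g : β → α)
    (hg : Set.InjOn g M) (hS : ∀ q ∈ S, ∃ m ∈ M, f m = q ∧ g m ∈ T) : #S ≤ #T := by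
  classical
  calc #S ≤ #((M.filter fun m => g m ∈ T).image f) := by
        refine card_le_card fun q hq => ?_
        obtain ⟨m, hm, rfl, hmT⟩ := hS q hq
        exact mem_image_of_mem f (mem_filter.mpr ⟨hm, hmT⟩)
    _ ≤ #(M.filter fun m => g m ∈ T) := card_image_le
    _ ≤ #T := card_le_card_of_injOn g (fun m hm => (mem_filter.mp hm).2)
        (hg.mono (coe_subset.mpr (filter_subset _ M)))

lemma rowWeight_insert_erase {D : Finset (ℕ × ℕ)} {a b : ℕ × ℕ} (hb : b ∈ D) (ha : a ∉ D)
    (hab : a.1 = b.1) (i : ℕ) : rowWeight (insert a (D.erase b)) i = rowWeight D i := by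
  unfold rowWeight
  rw [filter_insert, filter_erase]
  split_ifs with hai
  · have hbi : b ∈ D.filter (fun p => p.1 = i) := mem_filter.mpr ⟨hb, hab ▸ hai⟩
    rw [card_insert_of_notMem (fun h => ha (mem_filter.mp (mem_of_mem_erase h)).1),
      card_erase_add_one hbi]
  · rw [erase_eq_of_notMem]
    exact fun h => hai (hab.trans (mem_filter.mp h).2)

lemma insert_erase_insert_erase {α : Type*} [DecidableEq α] {D : Finset α} {a b : α}
    (ha : a ∉ D) (hb : b ∈ D) : insert b ((insert a (D.erase b)).erase a) = D := by
  rw [erase_insert fun h => ha (mem_of_mem_erase h), insert_erase hb]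

lemma mem_insert_erase_iff_of_row_ne {D : Finset (ℕ × ℕ)} {r c : ℕ} {p : ℕ × ℕ} (hp : p.1 ≠ r) :
    p ∈ insert (r, c) (D.erase (r, c + 1)) ↔ p ∈ D := by
  have hc : p ≠ (r, c) := fun h => hp (congrArg Prod.fst h)
  have hc' : p ≠ (r, c + 1) := fun h => hp (congrArg Prod.fst h)
  simp [hc, hc']

def colCount (X : Finset (ℕ × ℕ)) (d a b : ℕ) : ℕ :=
  #(X.filter fun p => p.2 = d ∧ a < p.1 ∧ p.1 ≤ b)

lemma colCount_congr {X Y : Finset (ℕ × ℕ)} {a : ℕ} (h : ∀ p : ℕ × ℕ, a < p.1 → (p ∈ X ↔ p ∈ Y))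
    (d b : ℕ) : colCount X d a b = colCount Y d a b := by
  unfold colCount
  congr 1
  ext p
  simp only [mem_filter]
  exact ⟨fun ⟨hp, hpa⟩ => ⟨(h p hpa.2.1).mp hp, hpa⟩, fun ⟨hp, hpa⟩ => ⟨(h p hpa.2.1).mpr hp, hpa⟩⟩

lemma mem_matchedBoxes {M : Finset ((ℕ × ℕ) × (ℕ × ℕ))} {p : ℕ × ℕ} :
    p ∈ matchedBoxes M ↔ (∃ m ∈ M, m.1 = p) ∨ ∃ m ∈ M, m.2 = p := by
  simp [matchedBoxes]

lemma matchedBoxes_mono {M M' : Finset ((ℕ × ℕ) × (ℕ × ℕ))} (h : M ⊆ M') :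
    matchedBoxes M ⊆ matchedBoxes M' :=
  union_subset_union (image_subset_image h) (image_subset_image h)

lemma mem_hInit {c : ℕ} {D : Finset (ℕ × ℕ)} {m : (ℕ × ℕ) × (ℕ × ℕ)} :
    m ∈ hInit c D ↔ ∃ r, (r, c + 1) ∈ D ∧ (r, c) ∈ D ∧ m = ((r, c + 1), (r, c)) := by
  simp only [hInit]
  constructor
  · intro hm
    obtain ⟨⟨r, d⟩, hp, rfl⟩ := mem_image.mp hm
    obtain ⟨hp, rfl, hrc⟩ := mem_filter.mp hp
    exact ⟨r, hp, hrc, rfl⟩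
  · rintro ⟨r, h1, h2, rfl⟩
    exact mem_image.mpr ⟨(r, c + 1), mem_filter.mpr ⟨h1, rfl, h2⟩, rfl⟩

structure HPairingInv (c : ℕ) (D : Finset (ℕ × ℕ)) (M : Finset ((ℕ × ℕ) × (ℕ × ℕ))) :
    Prop where
  hInit_subset : hInit c D ⊆ M
  fst_mem : ∀ m ∈ M, m.1 ∈ D ∧ m.1.2 = c + 1
  snd_mem : ∀ m ∈ M, m.2 ∈ D ∧ m.2.2 = c
  fst_row_le : ∀ m ∈ M, m.1.1 ≤ m.2.1
  injOn_fst : Set.InjOn Prod.fst (M : Set ((ℕ × ℕ) × (ℕ × ℕ)))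
  injOn_snd : Set.InjOn Prod.snd (M : Set ((ℕ × ℕ) × (ℕ × ℕ)))
  nested : ∀ m ∈ M, ∀ r, (r, c + 1) ∈ D → m.1.1 < r → r < m.2.1 → (r, c + 1) ∈ matchedBoxes M

namespace HPairingInv

variable {c : ℕ} {D : Finset (ℕ × ℕ)} {M : Finset ((ℕ × ℕ) × (ℕ × ℕ))}

lemma init (c : ℕ) (D : Finset (ℕ × ℕ)) : HPairingInv c D (hInit c D) where
  hInit_subset := subset_refl _
  fst_mem m hm := by obtain ⟨r, h1, -, rfl⟩ := mem_hInit.mp hm; exact ⟨h1, rfl⟩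
  snd_mem m hm := by obtain ⟨r, -, h2, rfl⟩ := mem_hInit.mp hm; exact ⟨h2, rfl⟩
  fst_row_le m hm := by obtain ⟨r, -, -, rfl⟩ := mem_hInit.mp hm; exact le_rfl
  injOn_fst m hm m' hm' he := by
    obtain ⟨r, -, -, rfl⟩ := mem_hInit.mp hm
    obtain ⟨r', -, -, rfl⟩ := mem_hInit.mp hm'
    simp_all
  injOn_snd m hm m' hm' he := by
    obtain ⟨r, -, -, rfl⟩ := mem_hInit.mp hm
    obtain ⟨r', -, -, rfl⟩ := mem_hInit.mp hm'
    simp_all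
  nested m hm r _ h1 h2 := by
    obtain ⟨r, -, -, rfl⟩ := mem_hInit.mp hm
    exact absurd (h1.trans h2) (lt_irrefl _)

lemma hStep (hv : HPairingInv c D M) {M' : Finset ((ℕ × ℕ) × (ℕ × ℕ))} (hs : HStep c D M M') :
    HPairingInv c D M' := by
  obtain ⟨rx, ry, hx, hy, hlt, hux, huy, hbet, rfl⟩ := hs
  have hmono := matchedBoxes_mono (subset_insert ((rx, c + 1), (ry, c)) M)
  have hnew : ((rx, c + 1), (ry, c)) ∉ M := fun h => hux (mem_matchedBoxes.mpr (.inl ⟨_, h, rfl⟩))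
  refine ⟨hv.hInit_subset.trans (subset_insert _ _), ?_, ?_, ?_, ?_, ?_, ?_⟩
  · simpa [hx] using hv.fst_mem
  · simpa [hy] using hv.snd_mem
  · simpa [hlt.le] using hv.fst_row_le
  · rw [coe_insert, Set.injOn_insert hnew]
    refine ⟨hv.injOn_fst, fun ⟨m, hm, he⟩ => hux (mem_matchedBoxes.mpr (.inl ⟨m, hm, he⟩))⟩
  · rw [coe_insert, Set.injOn_insert hnew]
    refine ⟨hv.injOn_snd, fun ⟨m, hm, he⟩ => huy (mem_matchedBoxes.mpr (.inr ⟨m, hm, he⟩))⟩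
  · intro m hm r hr h1 h2
    rcases mem_insert.mp hm with rfl | hm
    · exact hmono (hbet _ hr (.inr rfl) h1 h2)
    · exact hmono (hv.nested m hm r hr h1 h2)

lemma of_reflTransGen (h : Relation.ReflTransGen (HStep c D) (hInit c D) M) :
    HPairingInv c D M := by
  induction h with
  | refl => exact .init c D
  | tail _ hs ih => exact ih.hStep hs

lemma exists_fst_eq (hv : HPairingInv c D M) {p : ℕ × ℕ} (hp : p ∈ matchedBoxes M)
    (hpc : p.2 = c + 1) : ∃ m ∈ M, m.1 = p := by
  refine (mem_matchedBoxes.mp hp).resolve_right ?_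
  rintro ⟨m, hm, rfl⟩
  have := (hv.snd_mem m hm).2
  omega

lemma exists_snd_eq (hv : HPairingInv c D M) {p : ℕ × ℕ} (hp : p ∈ matchedBoxes M)
    (hpc : p.2 = c) : ∃ m ∈ M, m.2 = p := by
  refine (mem_matchedBoxes.mp hp).resolve_left ?_
  rintro ⟨m, hm, rfl⟩
  have := (hv.fst_mem m hm).2
  omega

lemma lt_fst_or_snd_le (hv : HPairingInv c D M) {r : ℕ} (hr : (r, c + 1) ∈ D)
    (hu : (r, c + 1) ∉ matchedBoxes M) {m : (ℕ × ℕ) × (ℕ × ℕ)} (hm : m ∈ M) :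
    r < m.1.1 ∨ m.2.1 ≤ r := by
  have hfst : m.1 ≠ (r, c + 1) := fun h => hu (mem_matchedBoxes.mpr (.inl ⟨m, hm, h⟩))
  have hr' : m.1.1 ≠ r := fun h => hfst (Prod.ext h (hv.fst_mem m hm).2)
  by_contra! h
  exact hu (hv.nested m hm r hr (by omega) h.2)

end HPairingInv

namespace HOutcome

variable {c : ℕ} {D : Finset (ℕ × ℕ)} {M : Finset ((ℕ × ℕ) × (ℕ × ℕ))}

/-- The closest pair of such unpaired boxes would admit one more `HStep`. -/
lemma mem_matchedBoxes_of_lt (ho : HOutcome c D M) {rx ry : ℕ} (hlt : rx < ry)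
    (hx : (rx, c + 1) ∈ D) (hux : (rx, c + 1) ∉ matchedBoxes M) (hy : (ry, c) ∈ D) :
    (ry, c) ∈ matchedBoxes M := by
  induction hd : ry - rx using Nat.strong_induction_on generalizing rx ry with
  | _ d ih =>
  by_contra huy
  refine ho.2 _ ⟨rx, ry, hx, hy, hlt, hux, huy, ?_, rfl⟩
  rintro ⟨t, d'⟩ hp hcol h1 h2
  by_contra hpu
  rcases hcol with rfl | rfl
  · exact hpu (ih (t - rx) (by omega) h1 hx hux hp rfl)
  · exact huy (ih (ry - t) (by omega) h2 hp hpu hy rfl)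

lemma colCount_le_of_not_mem_matchedBoxes (ho : HOutcome c D M) {r : ℕ} (hr : (r, c + 1) ∈ D)
    (hu : (r, c + 1) ∉ matchedBoxes M) (s : ℕ) : colCount D c r s ≤ colCount D (c + 1) r s := by
  have hv := HPairingInv.of_reflTransGen ho.1
  refine card_le_card_of_partner Prod.snd Prod.fst hv.injOn_fst fun ⟨t, d⟩ hq => ?_
  obtain ⟨hqD, rfl, hrt, hts⟩ := mem_filter.mp hq
  obtain ⟨m, hm, hmq⟩ := hv.exists_snd_eq (ho.mem_matchedBoxes_of_lt hrt hr hu hqD) rfl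
  have hrow := (hv.lt_fst_or_snd_le hr hu hm).resolve_right (by simpa [hmq] using hrt)
  obtain ⟨hmD, hmc⟩ := hv.fst_mem m hm
  have hms : m.1.1 ≤ s := (hv.fst_row_le m hm).trans (by simpa [hmq] using hts)
  exact ⟨m, hm, hmq, mem_filter.mpr ⟨hmD, hmc, hrow, hms⟩⟩

end HOutcome

namespace RectRel

variable {c : ℕ} {D E : Finset (ℕ × ℕ)}

lemma exists_row (h : RectRel c D E) :
    ∃ r, (r, c + 1) ∈ D ∧ (r, c) ∉ D ∧ E = insert (r, c) (D.erase (r, c + 1)) ∧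
      (∀ s, colCount E c r s ≤ colCount E (c + 1) r s) ∧
      ∀ a < r, colCount E (c + 1) a r < colCount E c a r := by
  obtain ⟨M, r, ho, hr, hu, hmin, rfl⟩ := h
  have hv := HPairingInv.of_reflTransGen ho.1
  have hrc : (r, c) ∉ D := fun h => hu (mem_matchedBoxes.mpr
    (.inl ⟨_, hv.hInit_subset (mem_hInit.mpr ⟨r, hr, h, rfl⟩), rfl⟩))
  refine ⟨r, hr, hrc, rfl, fun s => ?_, fun a ha => ?_⟩
  · rw [colCount_congr (fun p hp => mem_insert_erase_iff_of_row_ne hp.ne'),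
      colCount_congr (fun p hp => mem_insert_erase_iff_of_row_ne hp.ne')]
    exact ho.colCount_le_of_not_mem_matchedBoxes hr hu s
  · set E := insert (r, c) (D.erase (r, c + 1))
    have hrE : (r, c) ∈ E.filter fun p => p.2 = c ∧ a < p.1 ∧ p.1 ≤ r :=
      mem_filter.mpr ⟨mem_insert_self _ _, rfl, ha, le_rfl⟩
    refine (card_le_card_of_partner Prod.fst Prod.snd hv.injOn_snd fun q hq => ?_).trans_lt
      (card_erase_lt_of_mem hrE)
    obtain ⟨hqE, hqc, haq, hqr⟩ := mem_filter.mp hq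
    obtain ⟨hqr', hqD⟩ : q ≠ (r, c + 1) ∧ q ∈ D := by
      rcases mem_insert.mp hqE with rfl | hqE
      · simp at hqc
      · exact mem_erase.mp hqE
    have hqlt : q.1 < r := lt_of_le_of_ne hqr fun h => hqr' (Prod.ext h hqc)
    have hqm : q ∈ matchedBoxes M := by
      by_contra hqu
      have := hmin q.1 (hqc ▸ hqD) (hqc ▸ hqu)
      omega
    obtain ⟨m, hm, rfl⟩ := hv.exists_fst_eq hqm hqc
    obtain ⟨hmD, hmc⟩ := hv.snd_mem m hm
    have hmr := (hv.lt_fst_or_snd_le hr hu hm).resolve_left (by omega)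
    have hmr' : m.2 ≠ (r, c) := fun h => hrc (h ▸ hmD)
    refine ⟨m, hm, rfl, mem_erase.mpr ⟨hmr', mem_filter.mpr ⟨?_, hmc, ?_, hmr⟩⟩⟩
    · exact mem_insert_of_mem (mem_erase.mpr ⟨fun h => by simp [h] at hmc, hmD⟩)
    · exact haq.trans_le (hv.fst_row_le m hm)

lemma rowWeight_eq (h : RectRel c D E) (i : ℕ) : rowWeight E i = rowWeight D i := by
  obtain ⟨r, hr, hrc, rfl, -⟩ := h.exists_row
  exact rowWeight_insert_erase hr hrc rfl i

theorem leftUnique (c : ℕ) : Relator.LeftUnique (RectRel c) := by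
  intro D₁ D₂ E h₁ h₂
  obtain ⟨r₁, hr₁, hrc₁, hE₁, hdef₁, hsur₁⟩ := h₁.exists_row
  obtain ⟨r₂, hr₂, hrc₂, hE₂, hdef₂, hsur₂⟩ := h₂.exists_row
  have hrr : r₁ = r₂ := by
    by_contra hne
    rcases Nat.lt_or_gt_of_ne hne with h | h
    · exact (hsur₂ r₁ h).not_ge (hdef₁ r₂)
    · exact (hsur₁ r₂ h).not_ge (hdef₂ r₁)
  subst hrr
  calc D₁ = insert (r₁, c + 1) (E.erase (r₁, c)) := by
        rw [hE₁, insert_erase_insert_erase hrc₁ hr₁]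
    _ = D₂ := by rw [hE₂, insert_erase_insert_erase hrc₂ hr₂]

end RectRel

lemma ChainRel.leftUnique {R : ℕ → Finset (ℕ × ℕ) → Finset (ℕ × ℕ) → Prop}
    (hR : ∀ c, Relator.LeftUnique (R c)) : ∀ cs, Relator.LeftUnique (ChainRel R cs)
  | [], _, _, _, h₁, h₂ => h₁.symm.trans h₂
  | c :: cs, _, _, _, ⟨_, h₁, h₁'⟩, ⟨_, h₂, h₂'⟩ => by
    cases ChainRel.leftUnique hR cs h₁' h₂'
    exact hR c h₁ h₂

lemma ChainRel.apply_eq {β : Type*} {R : ℕ → Finset (ℕ × ℕ) → Finset (ℕ × ℕ) → Prop}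
    (φ : Finset (ℕ × ℕ) → β) (hR : ∀ c D E, R c D E → φ E = φ D) :
    ∀ cs D E, ChainRel R cs D E → φ E = φ D
  | [], _, _, h => congrArg φ h
  | c :: cs, _, _, ⟨F, h, h'⟩ => (ChainRel.apply_eq φ hR cs F _ h').trans (hR c _ F h)

/-- The Rectification algorithm `R_α` is weight-preserving and injective
(wherever it is nonzero, i.e. wherever the relation holds). -/
theorem rectification_weight_preserving_injective (α : List ℕ) :
    (∀ D D' : Finset (ℕ × ℕ), RalgRel α D D' → ∀ i, rowWeight D' i = rowWeight D i) ∧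
      (∀ D₁ D₂ E : Finset (ℕ × ℕ), RalgRel α D₁ E → RalgRel α D₂ E → D₁ = D₂) :=
  ⟨fun D D' h i => ChainRel.apply_eq (rowWeight · i) (fun _ _ _ h => h.rowWeight_eq i) _ D D' h,
    fun _ _ _ h₁ h₂ => ChainRel.leftUnique RectRel.leftUnique _ h₁ h₂⟩
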